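/- Let N be a prime and 1 ≤ d ≤ N, and let n = (n₁,…,n_d) and n′ = (n′₁,…,n′_d) be d-tuples of pairwise distinct elements of ℤ/Nℤ. Then there exists a unitary transformation U of ℂ^d with {φ_{m,n} : m ∈ ℤ/Nℤ} = {U·φ_{m,n′} : m ∈ ℤ/Nℤ} (equality of sets of vectors) if and only if there exists a unit u ∈ (ℤ/Nℤ)ˣ such that u·{n₁,…,n_d} = {n′₁,…,n′_d} as subsets of ℤ/Nℤ. In other words, unitary-equivalence classes of DFT-FUNTFs are in one-to-one correspondence with the orbits of the action of (ℤ/Nℤ)ˣ on d-element subsets of ℤ/Nℤ. -/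

import Mathlib

open scoped BigOperators

/-- The `m`-th vector of the DFT-FUNTF associated to the generators `n = (n₁,…,n_d)`:
its `k`-th coordinate is `(1/√d)·ω^(m·n_k)` where `ω = exp(2πi/N)`. -/
noncomputable def dftVec (N d : ℕ) (n : Fin d → ZMod N) (m : ZMod N) :
    EuclideanSpace ℂ (Fin d) :=
  WithLp.toLp 2 (fun k => ((1 / Real.sqrt d : ℝ) : ℂ) *
    Complex.exp (2 * Real.pi * Complex.I / N) ^ (m * n k).val)

/-!
The Gram entries of a DFT-FUNTF are `⟪φ_m, φ_m'⟫ = d⁻¹ ∑_k ω^((m' - m) n_k)`. A unitary `U` with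
`{φ_{m,n}} = {U φ_{m,n'}}` therefore gives `∑_k ω^(n_k) = ∑_k ω^(b n'_k)` for some `b`. For `N`
prime every integer relation among `1, ω, …, ω^(N-1)` is a multiple of `1 + ω + ⋯ + ω^(N-1) = 0`,
because the cyclotomic polynomial is the minimal polynomial of `ω`; so a multiset of `N`-th roots of unity
of given size is determined by its sum, and `{n_k} = b • {n'_k}`. The same argument for `U⁻¹`
takes care of `b = 0`. Conversely, if `u • {n_k} = {n'_k}`, the permutation of coordinates
matching `n'` with `u • n` sends `φ_{m,n'}` to `φ_{m u,n}`.
-/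

open Polynomial Pointwise ComplexConjugate

theorem IsPrimitiveRoot.eq_of_sum_zsmul_pow_eq_zero {K : Type*} [Field K] [CharZero K]
    {p : ℕ} [Fact p.Prime] {ζ : K} (hζ : IsPrimitiveRoot ζ p) (c : ZMod p → ℤ)
    (h : ∑ j, c j • ζ ^ j.val = 0) (j : ZMod p) : c j = c 0 := by
  have hp : 0 < p := (Fact.out : p.Prime).pos
  set P : ℤ[X] := ∑ j : ZMod p, C (c j) * X ^ j.val
  have coeff_P (j : ZMod p) : P.coeff j.val = c j := by
    simp [P, (ZMod.val_injective p).eq_iff]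
  have hdvd : cyclotomic p ℤ ∣ P := by
    rw [cyclotomic_eq_minpoly hζ hp]
    exact minpoly.isIntegrallyClosed_dvd (hζ.isIntegral hp) (by simpa [P, zsmul_eq_mul] using h)
  have hdeg : P.natDegree ≤ (cyclotomic p ℤ).natDegree := by
    rw [natDegree_cyclotomic, Nat.totient_prime Fact.out]
    refine natDegree_sum_le_of_forall_le _ _ fun j _ => (natDegree_C_mul_X_pow_le _ _).trans ?_
    have := j.val_lt; omega
  have hP := eq_leadingCoeff_mul_of_monic_of_dvd_of_natDegree_le (cyclotomic.monic p ℤ) hdvd hdeg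
  have coeff_cyclotomic (j : ZMod p) : (cyclotomic p ℤ).coeff j.val = 1 := by
    simp [cyclotomic_prime, coeff_X_pow, j.val_lt]
  rw [← coeff_P, ← coeff_P, hP, coeff_C_mul, coeff_C_mul, coeff_cyclotomic, coeff_cyclotomic]

theorem Multiset.sum_map_eq_sum_count_nsmul {ι M : Type*} [Fintype ι] [DecidableEq ι]
    [AddCommMonoid M] (s : Multiset ι) (f : ι → M) : (s.map f).sum = ∑ i, s.count i • f i := by
  rw [Finset.sum_multiset_map_count]
  exact Finset.sum_subset (Finset.subset_univ _) fun i _ hi => by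
    rw [Multiset.count_eq_zero_of_notMem (by simpa using hi), zero_smul]

namespace ZMod

lemma stdAddChar_eq_pow_val {p : ℕ} [NeZero p] (j : ZMod p) :
    stdAddChar j = stdAddChar (1 : ZMod p) ^ j.val := by
  rw [← AddChar.map_nsmul_eq_pow, nsmul_one, natCast_zmod_val]

lemma isPrimitiveRoot_stdAddChar_one (p : ℕ) [NeZero p] :
    IsPrimitiveRoot (stdAddChar (1 : ZMod p)) p := by
  convert Complex.isPrimitiveRoot_exp p (NeZero.ne p) using 1
  simpa using stdAddChar_coe (N := p) 1

theorem multiset_eq_of_sum_map_stdAddChar_eq {p : ℕ} [Fact p.Prime] {s t : Multiset (ZMod p)}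
    (hcard : Multiset.card s = Multiset.card t)
    (hsum : (s.map stdAddChar).sum = (t.map stdAddChar).sum) : s = t := by
  classical
  set c : ZMod p → ℤ := fun j => s.count j - t.count j
  have hc : ∑ j, c j • stdAddChar (1 : ZMod p) ^ j.val = 0 := by
    simp only [c, ← stdAddChar_eq_pow_val, sub_smul, Finset.sum_sub_distrib, natCast_zsmul,
      ← Multiset.sum_map_eq_sum_count_nsmul, hsum, sub_self]
  have hconst := (isPrimitiveRoot_stdAddChar_one p).eq_of_sum_zsmul_pow_eq_zero c hc
  have hc0 : c 0 = 0 := by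
    have : ∑ j, c j = 0 := by
      simp only [c, Finset.sum_sub_distrib, ← Nat.cast_sum,
        Multiset.sum_count_eq_card fun a _ => Finset.mem_univ a, hcard, sub_self]
    simpa [hconst, (Fact.out : p.Prime).ne_zero] using this
  ext j
  simpa [c, sub_eq_zero] using (hconst j).trans hc0

theorem range_eq_of_sum_stdAddChar_eq {ι : Type*} [Fintype ι] {p : ℕ} [Fact p.Prime]
    (v w : ι → ZMod p) (h : ∑ k, stdAddChar (v k) = ∑ k, stdAddChar (w k)) :
    Set.range v = Set.range w := by
  have hvw := multiset_eq_of_sum_map_stdAddChar_eq (s := Finset.univ.val.map v)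
    (t := Finset.univ.val.map w) (by simp) (by simpa [Multiset.map_map] using h)
  ext x
  simpa using congrArg (x ∈ ·) hvw

end ZMod

theorem Set.exists_units_smul_eq_of_eq_smul_of_eq_smul {G₀ : Type*} [GroupWithZero G₀]
    {S T : Set G₀} {a b : G₀} (ha : S = a • T) (hb : T = b • S) : ∃ u : G₀ˣ, (u : G₀) • S = T := by
  rcases eq_or_ne a 0 with rfl | ha0
  · rcases eq_or_ne b 0 with rfl | hb0
    · refine ⟨1, ?_⟩
      rw [Units.val_one, one_smul, ha, hb, smul_smul, zero_mul]
    · exact ⟨Units.mk0 b hb0, hb.symm⟩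
  · refine ⟨(Units.mk0 a ha0)⁻¹, ?_⟩
    rw [ha, smul_smul, Units.val_inv_eq_inv_val, Units.val_mk0, inv_mul_cancel₀ ha0, one_smul]

theorem Function.Injective.exists_equiv_comp_eq {ι α : Type*} [Finite ι] {f g : ι → α}
    (hf : Injective f) (h : Set.range f ⊆ Set.range g) : ∃ σ : ι ≃ ι, g ∘ σ = f := by
  choose τ hτ using fun k => h (Set.mem_range_self k)
  have hτ_inj : Injective τ := fun k k' e => hf (by rw [← hτ k, ← hτ k', e])
  exact ⟨Equiv.ofBijective τ (Finite.injective_iff_bijective.mp hτ_inj), funext hτ⟩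

section DFT

variable {N d : ℕ}

lemma dftVec_const_mul (n : Fin d → ZMod N) (a m : ZMod N) :
    dftVec N d (fun k => a * n k) m = dftVec N d n (m * a) := by
  simp only [dftVec, mul_assoc]

lemma dftVec_comp_equiv (n : Fin d → ZMod N) (σ : Fin d ≃ Fin d) (m : ZMod N) :
    dftVec N d (n ∘ σ) m = LinearIsometryEquiv.piLpCongrLeft 2 ℂ ℂ σ.symm (dftVec N d n m) := by
  ext k
  simp [dftVec, LinearIsometryEquiv.piLpCongrLeft_apply]

theorem exists_linearIsometryEquiv_of_units_smul_range_eq (n n' : Fin d → ZMod N)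
    (hn : Function.Injective n) (u : (ZMod N)ˣ) (hu : (u : ZMod N) • Set.range n = Set.range n') :
    ∃ U : EuclideanSpace ℂ (Fin d) ≃ₗᵢ[ℂ] EuclideanSpace ℂ (Fin d),
      Set.range (dftVec N d n) = Set.range (U ∘ dftVec N d n') := by
  obtain ⟨σ, hσ⟩ := ((u.isUnit.mul_right_injective).comp hn).exists_equiv_comp_eq
    (g := n') (by rw [← hu, Set.smul_set_range]; rfl)
  refine ⟨LinearIsometryEquiv.piLpCongrLeft 2 ℂ ℂ σ.symm, ?_⟩
  have hU : ∀ m, LinearIsometryEquiv.piLpCongrLeft 2 ℂ ℂ σ.symm (dftVec N d n' m)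
      = dftVec N d n (m * u) := by
    intro m
    rw [← dftVec_comp_equiv, hσ, Function.comp_def, dftVec_const_mul]
  rw [Function.comp_def]
  simp_rw [hU]
  exact ((Units.mulRight u).surjective.range_comp _).symm

variable [NeZero N]

lemma Complex.exp_two_pi_I_div_pow_val (a : ZMod N) :
    Complex.exp (2 * Real.pi * Complex.I / N) ^ a.val = ZMod.stdAddChar a := by
  rw [← Complex.exp_nat_mul, ZMod.stdAddChar_apply, ZMod.toCircle_apply]
  ring_nf

lemma dftVec_apply (n : Fin d → ZMod N) (m : ZMod N) (k : Fin d) :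
    dftVec N d n m k = ((1 / Real.sqrt d : ℝ) : ℂ) * ZMod.stdAddChar (m * n k) := by
  simp [dftVec, Complex.exp_two_pi_I_div_pow_val]

lemma inner_dftVec (n : Fin d → ZMod N) (m m' : ZMod N) :
    inner ℂ (dftVec N d n m) (dftVec N d n m') =
      (d : ℂ)⁻¹ * ∑ k, ZMod.stdAddChar ((m' - m) * n k) := by
  have hscale : ((1 / Real.sqrt d : ℝ) : ℂ) * conj ((1 / Real.sqrt d : ℝ) : ℂ) = (d : ℂ)⁻¹ := by
    rw [Complex.conj_ofReal, ← Complex.ofReal_mul, div_mul_div_comm, one_mul,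
      Real.mul_self_sqrt (Nat.cast_nonneg d)]
    simp
  rw [PiLp.inner_apply, Finset.mul_sum]
  refine Finset.sum_congr rfl fun k _ => ?_
  rw [RCLike.inner_apply, dftVec_apply, dftVec_apply, map_mul (starRingEnd ℂ),
    ← AddChar.map_neg_eq_conj, mul_mul_mul_comm, hscale, ← AddChar.map_add_eq_mul,
    ← sub_eq_add_neg, sub_mul]

end DFT

theorem exists_range_eq_smul_range_of_linearIsometryEquiv {N d : ℕ} [Fact N.Prime]
    (n n' : Fin d → ZMod N) (U : EuclideanSpace ℂ (Fin d) ≃ₗᵢ[ℂ] EuclideanSpace ℂ (Fin d))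
    (hU : Set.range (dftVec N d n) = Set.range (U ∘ dftVec N d n')) :
    ∃ b : ZMod N, Set.range n = b • Set.range n' := by
  obtain ⟨m₀, hm₀⟩ : dftVec N d n 0 ∈ Set.range (U ∘ dftVec N d n') := hU ▸ ⟨0, rfl⟩
  obtain ⟨m₁, hm₁⟩ : dftVec N d n 1 ∈ Set.range (U ∘ dftVec N d n') := hU ▸ ⟨1, rfl⟩
  have hinner : inner ℂ (dftVec N d n 0) (dftVec N d n 1) =
      inner ℂ (dftVec N d n' m₀) (dftVec N d n' m₁) := by
    rw [← hm₀, ← hm₁, Function.comp_apply, Function.comp_apply, U.inner_map_map]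
  have hsum : ∑ k, ZMod.stdAddChar (n k) = ∑ k, ZMod.stdAddChar ((m₁ - m₀) * n' k) := by
    rw [inner_dftVec, inner_dftVec, sub_zero] at hinner
    rcases eq_or_ne d 0 with rfl | hd
    · simp
    · simpa using mul_left_cancel₀ (inv_ne_zero (Nat.cast_ne_zero.mpr hd)) hinner
  exact ⟨m₁ - m₀, by rw [ZMod.range_eq_of_sum_stdAddChar_eq _ _ hsum, Set.smul_set_range]; rfl⟩

theorem dft_funtf_unitary_equiv_iff_orbit_general (N d : ℕ) (hN : N.Prime)
    (n n' : Fin d → ZMod N) (hn : Function.Injective n) :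
    (∃ U : EuclideanSpace ℂ (Fin d) ≃ₗᵢ[ℂ] EuclideanSpace ℂ (Fin d),
        Set.range (dftVec N d n) = Set.range (fun m => U (dftVec N d n' m))) ↔
      ∃ u : (ZMod N)ˣ,
        (fun x => (u : ZMod N) * x) '' Set.range n = Set.range n' := by
  have : Fact N.Prime := ⟨hN⟩
  constructor
  · rintro ⟨U, hU⟩
    have hU_symm : Set.range (dftVec N d n') = Set.range (U.symm ∘ dftVec N d n) := by
      rw [Set.range_comp, hU, ← Set.range_comp]
      simp [Function.comp_def]
    obtain ⟨a, ha⟩ := exists_range_eq_smul_range_of_linearIsometryEquiv n n' U hU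
    obtain ⟨b, hb⟩ := exists_range_eq_smul_range_of_linearIsometryEquiv n' n U.symm hU_symm
    exact Set.exists_units_smul_eq_of_eq_smul_of_eq_smul ha hb
  · rintro ⟨u, hu⟩
    exact exists_linearIsometryEquiv_of_units_smul_range_eq n n' hn u hu

/-- For `N` prime, two DFT-FUNTFs are unitarily equivalent (as sets of vectors) iff
their sets of generators lie in the same orbit of the multiplication action of
`(ℤ/Nℤ)ˣ` on `d`-element subsets of `ℤ/Nℤ`. -/
theorem dft_funtf_unitary_equiv_iff_orbit (N d : ℕ) [NeZero N] (hN : N.Prime)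
    (hd : 1 ≤ d) (hdN : d ≤ N) (n n' : Fin d → ZMod N)
    (hn : Function.Injective n) (hn' : Function.Injective n') :
    (∃ U : EuclideanSpace ℂ (Fin d) ≃ₗᵢ[ℂ] EuclideanSpace ℂ (Fin d),
        Set.range (dftVec N d n) = Set.range (fun m => U (dftVec N d n' m))) ↔
      ∃ u : (ZMod N)ˣ,
        (fun x => (u : ZMod N) * x) '' Set.range n = Set.range n' :=
  dft_funtf_unitary_equiv_iff_orbit_general N d hN n n' hn
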